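/- For every r ≥ 3 and c > C(r,2), the Berge-Ramsey number R_r(Berge-K_n; c) grows exponentially in n; in particular it is not bounded above by any polynomial in n. Concretely, for every constant d and every sufficiently large n, R_r(Berge-K_n; c) > n^d. -/

import Mathlib

/-!
A random `c`-colouring `g` of the pairs of `[N]` uses every colour on the pairs of every
`n`-set once `C(N,n) · c · (1 - 1/c)^C(n,2) < 1`, which holds for `N ≤ n^d` and large `n`
because `C(N,n) ≤ n^(dn)` while `(c/(c-1))^C(n,2)` is `exp(Θ(n²))`. Colour an `r`-set by a
colour that `g` misses on its `C(r,2) < c` pairs: a monochromatic Berge `K_n` of colour `k`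
would contain a pair of `g`-colour `k` inside one of its edges of colour `k`.

Since `sInf ∅ = 0`, the bound also needs `R_r(Berge-K_n; c)` to be finite: fix an
`(r-2)`-set `F` and colour each pair `p` outside `F` by `χ (p ∪ F)`; Ramsey's theorem for pairs
gives a monochromatic `K_n`, and the edges `p ∪ F` of distinct pairs are distinct.
-/

/-- `χ` contains a monochromatic Berge copy of `K_n`. -/
def HasMonoBerge (r n c N : ℕ) (χ : Finset (Fin N) → Fin c) : Prop :=
  ∃ (S : Finset (Fin N)) (k : Fin c) (E : Fin N → Fin N → Finset (Fin N)),
    S.card = n ∧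
    (∀ u ∈ S, ∀ v ∈ S, u ≠ v →
      (E u v).card = r ∧ u ∈ E u v ∧ v ∈ E u v ∧ χ (E u v) = k ∧ E u v = E v u) ∧
    (∀ u ∈ S, ∀ v ∈ S, ∀ u' ∈ S, ∀ v' ∈ S, u ≠ v → u' ≠ v' →
      E u v = E u' v' → ({u, v} : Finset (Fin N)) = {u', v'})

/-- The Berge-Ramsey number `R_r(Berge-K_n; c)`. -/
noncomputable def bergeRamsey (r n c : ℕ) : ℕ :=
  sInf {N | ∀ χ : Finset (Fin N) → Fin c, HasMonoBerge r n c N χ}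

open Finset Filter

section Ramsey

variable {V β : Type*} [DecidableEq V] [Fintype β] [Nonempty β] [DecidableEq β]

theorem exists_seq_pairColor_eq_of_lt (f : V → V → β) (t : ℕ) (A : Finset V)
    (hA : (Fintype.card β + 1) ^ t ≤ #A) :
    ∃ (x : Fin t → V) (g : Fin t → β), Function.Injective x ∧ (∀ i, x i ∈ A) ∧
      ∀ i j, i < j → f (x i) (x j) = g i := by
  induction t generalizing A with
  | zero => exact ⟨Fin.elim0, Fin.elim0, Function.injective_of_subsingleton _,
      fun i => i.elim0, fun i => i.elim0⟩
  | succ t ih =>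
    obtain ⟨a, ha⟩ : A.Nonempty := card_pos.1 (lt_of_lt_of_le (by positivity) hA)
    have hfiber : #(univ : Finset β) * ((Fintype.card β + 1) ^ t - 1) < #(A.erase a) := by
      obtain ⟨X, hX⟩ : ∃ X, (Fintype.card β + 1) ^ t = X + 1 :=
        Nat.exists_eq_add_one.2 (by positivity)
      rw [pow_succ, hX, add_one_mul, mul_add_one] at hA
      rw [card_univ, card_erase_of_mem ha, hX, Nat.add_sub_cancel, mul_comm]
      have := Fintype.card_pos (α := β)
      omega
    obtain ⟨k, -, hk⟩ := exists_lt_card_fiber_of_mul_lt_card_of_maps_to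
      (fun v _ => mem_univ (f a v)) hfiber
    obtain ⟨x, g, hinj, hmem, hcol⟩ := ih {v ∈ A.erase a | f a v = k} (by omega)
    have hmem' : ∀ i, x i ∈ A.erase a ∧ f a (x i) = k := fun i => mem_filter.1 (hmem i)
    refine ⟨Fin.cons a x, Fin.cons k g, ?_, ?_, ?_⟩
    · exact Fin.cons_injective_iff.2 ⟨fun ⟨i, hi⟩ => by simpa [hi] using (hmem' i).1, hinj⟩
    · exact Fin.cases ha fun i => mem_of_mem_erase (hmem' i).1
    · intro i j hij
      induction j using Fin.cases with
      | zero => exact absurd hij (Fin.not_lt_zero i)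
      | succ j =>
        induction i using Fin.cases with
        | zero => exact (hmem' j).2
        | succ i => exact hcol i j (Fin.succ_lt_succ_iff.1 hij)

theorem exists_pairColor_monochromatic (ψ : Finset V → β) (n : ℕ) (A : Finset V)
    (hA : (Fintype.card β + 1) ^ (Fintype.card β * (n - 1) + 1) ≤ #A) :
    ∃ S ⊆ A, #S = n ∧ ∃ k, ∀ u ∈ S, ∀ v ∈ S, u ≠ v → ψ {u, v} = k := by
  obtain ⟨x, g, hinj, hmem, hcol⟩ := exists_seq_pairColor_eq_of_lt (fun u v => ψ {u, v}) _ A hA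
  obtain ⟨k, -, hk⟩ := exists_lt_card_fiber_of_mul_lt_card_of_maps_to (s := univ)
    (fun i _ => mem_univ (g i)) (n := n - 1) (by simp)
  obtain ⟨I, hI, hIcard⟩ := exists_subset_card_eq (show n ≤ #{i | g i = k} by omega)
  have hgI : ∀ i ∈ I, g i = k := fun i hi => (mem_filter.1 (hI hi)).2
  refine ⟨I.image x, fun _ hu => ?_, by rw [card_image_of_injective _ hinj, hIcard], k, ?_⟩
  · obtain ⟨i, -, rfl⟩ := mem_image.1 hu
    exact hmem i
  · simp only [mem_image]
    rintro _ ⟨i, hi, rfl⟩ _ ⟨j, hj, rfl⟩ hij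
    rcases lt_or_gt_of_ne (ne_of_apply_ne x hij) with h | h
    · rw [← hgI i hi, ← hcol i j h]
    · rw [← hgI j hj, ← hcol j i h, pair_comm]

end Ramsey

theorem exists_forall_hasMonoBerge {r : ℕ} (hr : 2 ≤ r) (n : ℕ) {c : ℕ} (hc : 0 < c) :
    ∃ N, ∀ χ : Finset (Fin N) → Fin c, HasMonoBerge r n c N χ := by
  have : Nonempty (Fin c) := ⟨⟨0, hc⟩⟩
  set R := (c + 1) ^ (c * (n - 1) + 1)
  refine ⟨R + (r - 2), fun χ => ?_⟩
  obtain ⟨F, -, hF⟩ := exists_subset_card_eq (s := (univ : Finset (Fin (R + (r - 2)))))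
    (n := r - 2) (by simp)
  obtain ⟨S, hSF, hS, k, hk⟩ := exists_pairColor_monochromatic (fun p => χ (p ∪ F)) n Fᶜ
    (by simp [card_compl, hF, R])
  have hdisj : ∀ u ∈ S, ∀ v ∈ S, Disjoint {u, v} F := fun u hu v hv =>
    disjoint_left.2 fun w hw => by
      rcases mem_insert.1 hw with rfl | hw
      · exact mem_compl.1 (hSF hu)
      · exact mem_compl.1 (hSF (mem_singleton.1 hw ▸ hv))
  refine ⟨S, k, fun u v => {u, v} ∪ F, hS, fun u hu v hv huv => ?_, ?_⟩
  · refine ⟨?_, by simp, by simp, hk u hu v hv huv, by simp only [pair_comm]⟩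
    rw [card_union_of_disjoint (hdisj u hu v hv), card_pair huv, hF]
    omega
  · intro u hu v hv u' hu' v' hv' _ _ h
    rw [← union_sdiff_cancel_right (hdisj u hu v hv), show {u, v} ∪ F = {u', v'} ∪ F from h,
      union_sdiff_cancel_right (hdisj u' hu' v' hv')]

section Counting

variable {α β : Type*} [Fintype α] [DecidableEq α] [Fintype β] [DecidableEq β]

theorem card_filter_forall_ne (A : Finset α) (b : β) :
    #{g : α → β | ∀ a ∈ A, g a ≠ b} =
      (Fintype.card β - 1) ^ #A * Fintype.card β ^ (Fintype.card α - #A) := by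
  have hpi : ({g : α → β | ∀ a ∈ A, g a ≠ b} : Finset (α → β)) =
      Fintype.piFinset fun a => if a ∈ A then univ.erase b else univ := by
    ext g
    simp only [mem_filter, mem_univ, true_and, Fintype.mem_piFinset]
    refine forall_congr' fun a => ?_
    split_ifs with ha <;> simp [ha]
  rw [hpi, Fintype.card_piFinset]
  simp only [apply_ite card, card_erase_of_mem (mem_univ b), card_univ]
  rw [prod_ite, prod_const, prod_const, filter_mem_eq_inter, univ_inter, filter_not,
    card_sdiff_of_subset (filter_subset _ _), filter_mem_eq_inter, univ_inter, card_univ]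

theorem exists_forall_exists_mem_eq_of_card_lt [Nonempty β] (𝒜 : Finset (Finset α)) {P : ℕ}
    (h𝒜 : ∀ A ∈ 𝒜, #A = P)
    (hcount : #𝒜 * Fintype.card β * (Fintype.card β - 1) ^ P < Fintype.card β ^ P) :
    ∃ g : α → β, ∀ A ∈ 𝒜, ∀ b, ∃ a ∈ A, g a = b := by
  rcases 𝒜.eq_empty_or_nonempty with rfl | ⟨A₀, hA₀⟩
  · exact ⟨fun _ => Classical.arbitrary β, by simp⟩
  have hP : P ≤ Fintype.card α := h𝒜 A₀ hA₀ ▸ card_le_univ A₀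
  by_contra! hbad
  have hcover : (univ : Finset (α → β)) ⊆
      (𝒜 ×ˢ univ).biUnion fun Ab => {g | ∀ a ∈ Ab.1, g a ≠ Ab.2} := by
    intro g _
    obtain ⟨A, hA, b, hb⟩ := hbad g
    exact mem_biUnion.2 ⟨(A, b), mem_product.2 ⟨hA, mem_univ b⟩, mem_filter.2 ⟨mem_univ g, hb⟩⟩
  have hle := (card_le_card hcover).trans card_biUnion_le
  rw [sum_congr rfl fun Ab hAb => by
      rw [card_filter_forall_ne, h𝒜 Ab.1 (mem_product.1 hAb).1], sum_const, card_product,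
    card_univ, card_univ, Fintype.card_fun, smul_eq_mul] at hle
  have hsplit : Fintype.card β ^ Fintype.card α =
      Fintype.card β ^ P * Fintype.card β ^ (Fintype.card α - P) := by
    rw [← pow_add, Nat.add_sub_cancel' hP]
  have := Nat.mul_lt_mul_of_pos_right hcount
    (pow_pos (Fintype.card_pos (α := β)) (Fintype.card α - P))
  rw [← hsplit] at this
  linarith

end Counting

theorem exists_color_forall_pair_ne {α β : Type*} [Fintype β] [Nonempty β] [DecidableEq β]
    {r : ℕ} (hr : r.choose 2 < Fintype.card β) (g : Finset α → β) :
    ∃ χ : Finset α → β, ∀ e, #e = r → ∀ p ∈ e.powersetCard 2, g p ≠ χ e := by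
  have : ∀ e : Finset α, ∃ k, #e = r → ∀ p ∈ e.powersetCard 2, g p ≠ k := by
    intro e
    by_cases he : #e = r
    · have hlt : #((e.powersetCard 2).image g) < #(univ : Finset β) :=
        calc #((e.powersetCard 2).image g) ≤ #(e.powersetCard 2) := card_image_le
          _ < #(univ : Finset β) := by rwa [card_powersetCard, he, card_univ]
      obtain ⟨k, -, hk⟩ := exists_mem_notMem_of_card_lt_card hlt
      exact ⟨k, fun _ p hp hpk => hk (hpk ▸ mem_image_of_mem g hp)⟩
    · exact ⟨Classical.arbitrary β, fun h => absurd h he⟩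
  choose χ hχ using this
  exact ⟨χ, hχ⟩

theorem not_hasMonoBerge_of_forall_pair_ne {r n c N : ℕ} {g χ : Finset (Fin N) → Fin c}
    (hg : ∀ S : Finset (Fin N), #S = n → ∀ k, ∃ p ∈ S.powersetCard 2, g p = k)
    (hχ : ∀ e, #e = r → ∀ p ∈ e.powersetCard 2, g p ≠ χ e) :
    ¬ HasMonoBerge r n c N χ := by
  rintro ⟨S, k, E, hS, hE, -⟩
  obtain ⟨p, hp, hpk⟩ := hg S hS k
  obtain ⟨hpS, hp2⟩ := mem_powersetCard.1 hp
  obtain ⟨u, v, huv, rfl⟩ := card_eq_two.1 hp2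
  obtain ⟨hcard, hu, hv, hk, -⟩ := hE u (hpS (by simp)) v (hpS (by simp)) huv
  exact hχ _ hcard {u, v}
    (mem_powersetCard.2 ⟨insert_subset hu (singleton_subset_iff.2 hv), card_pair huv⟩)
    (hpk.trans hk.symm)

theorem exists_not_hasMonoBerge {r n c N : ℕ} (hrc : r.choose 2 < c)
    (hcount : N.choose n * c * (c - 1) ^ n.choose 2 < c ^ n.choose 2) :
    ∃ χ, ¬ HasMonoBerge r n c N χ := by
  have : Nonempty (Fin c) := ⟨⟨0, by omega⟩⟩
  set 𝒜 := ((univ : Finset (Fin N)).powersetCard n).image (powersetCard 2)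
  have h𝒜 : ∀ A ∈ 𝒜, #A = n.choose 2 := by
    simp only [𝒜, mem_image, mem_powersetCard]
    rintro _ ⟨S, ⟨-, hS⟩, rfl⟩
    rw [card_powersetCard, hS]
  have h𝒜card : #𝒜 ≤ N.choose n := card_image_le.trans (by rw [card_powersetCard, card_univ,
    Fintype.card_fin])
  obtain ⟨g, hg⟩ := exists_forall_exists_mem_eq_of_card_lt (β := Fin c) 𝒜 h𝒜 (by
    simp only [Fintype.card_fin]
    exact lt_of_le_of_lt (by gcongr) hcount)
  obtain ⟨χ, hχ⟩ := exists_color_forall_pair_ne (by simpa using hrc) g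
  exact ⟨χ, not_hasMonoBerge_of_forall_pair_ne (fun S hS => hg _
    (mem_image_of_mem _ (mem_powersetCard.2 ⟨subset_univ S, hS⟩))) hχ⟩

theorem choose_mul_lt_of_sq_mul_pow_lt {q n d N : ℕ} (hq : 0 < q) (hn : n ≠ 0) (hN : N ≤ n ^ d)
    (h : ((q : ℝ) + 1) ^ 2 * (n : ℝ) ^ (2 * d) < (((q : ℝ) + 1) / q) ^ (n - 1)) :
    N.choose n * (q + 1) * q ^ n.choose 2 < (q + 1) ^ n.choose 2 := by
  set a : ℝ := ((q : ℝ) + 1) / q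
  set P := n.choose 2
  have hP : (n - 1) * n = 2 * P := by
    rw [show P = n * (n - 1) / 2 from Nat.choose_two_right n, mul_comm,
      Nat.mul_div_cancel' (Nat.even_mul_pred_self n).two_dvd]
  have hchoose : (N.choose n : ℝ) ≤ ((n : ℝ) ^ d) ^ n := by
    exact_mod_cast (Nat.choose_le_pow N n).trans (Nat.pow_le_pow_left hN n)
  -- `2 P = n (n - 1)`, so squaring turns `a ^ P` into `(a ^ (n - 1)) ^ n`
  have hx : (N.choose n : ℝ) * (q + 1) < a ^ P := by
    rw [← pow_lt_pow_iff_left₀ (by positivity) (by positivity) two_ne_zero]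
    calc ((N.choose n : ℝ) * (q + 1)) ^ 2 ≤ (((n : ℝ) ^ d) ^ n * (q + 1)) ^ 2 := by gcongr
      _ = ((q : ℝ) + 1) ^ 2 * ((n : ℝ) ^ (2 * d)) ^ n := by ring
      _ ≤ (((q : ℝ) + 1) ^ 2 * (n : ℝ) ^ (2 * d)) ^ n := by
        rw [mul_pow]
        gcongr
        exact le_self_pow₀ (one_le_pow₀ (by linarith)) hn
      _ < (a ^ (n - 1)) ^ n := by gcongr
      _ = (a ^ P) ^ 2 := by rw [← pow_mul, ← pow_mul, hP, mul_comm]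
  have hqpos : (0 : ℝ) < q := by exact_mod_cast hq
  have : (N.choose n : ℝ) * (q + 1) * q ^ P < (q + 1) ^ P :=
    calc (N.choose n : ℝ) * (q + 1) * q ^ P < a ^ P * q ^ P := by gcongr
      _ = (q + 1) ^ P := by rw [← mul_pow, div_mul_cancel₀ _ hqpos.ne']
  exact_mod_cast this

theorem eventually_choose_mul_lt {c : ℕ} (hc : 2 ≤ c) (d : ℕ) :
    ∀ᶠ n : ℕ in atTop, ∀ N ≤ n ^ d, N.choose n * c * (c - 1) ^ n.choose 2 < c ^ n.choose 2 := by
  obtain ⟨q, rfl⟩ : ∃ q, c = q + 1 := ⟨c - 1, by omega⟩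
  have hq : (0 : ℝ) < q := by exact_mod_cast (show 0 < q by omega)
  set a : ℝ := ((q : ℝ) + 1) / q
  have ha : 1 < a := by rw [lt_div_iff₀ hq]; linarith
  have hlim := tendsto_pow_const_div_const_pow_of_one_lt (2 * d) ha
  filter_upwards [(tendsto_order.1 hlim).2 (1 / ((q + 1) ^ 2 * a)) (by positivity),
    eventually_ge_atTop 1] with n hn hn1 N hN
  rw [Nat.add_sub_cancel]
  refine choose_mul_lt_of_sq_mul_pow_lt (by omega) (by omega) hN ?_
  rw [← pow_sub_one_mul (by omega : n ≠ 0), div_lt_div_iff₀ (by positivity) (by positivity)] at hn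
  nlinarith [pow_pos (zero_lt_one.trans ha) (n - 1)]

theorem lt_bergeRamsey {r n c M : ℕ}
    (hfin : ∃ N, ∀ χ : Finset (Fin N) → Fin c, HasMonoBerge r n c N χ)
    (hM : ∀ N ≤ M, ∃ χ, ¬ HasMonoBerge r n c N χ) : M < bergeRamsey r n c := by
  by_contra! hle
  obtain ⟨χ, hχ⟩ := hM _ hle
  exact hχ (Nat.sInf_mem hfin χ)

/-- For `r ≥ 3` and `c > C(r,2)`, the Berge-Ramsey number `R_r(Berge-K_n; c)` grows
superpolynomially: for every `d` and all sufficiently large `n`, it exceeds `n^d`. -/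
theorem stmt13 (r c : ℕ) (hr : 3 ≤ r) (hc : r.choose 2 < c) (d : ℕ) :
    ∃ n₀ : ℕ, ∀ n ≥ n₀, n ^ d < bergeRamsey r n c := by
  have hc2 : 2 ≤ c := calc
    2 ≤ Nat.choose 3 2 := by decide
    _ ≤ r.choose 2 := Nat.choose_le_choose 2 hr
    _ ≤ c := hc.le
  obtain ⟨n₀, hn₀⟩ := eventually_atTop.1 (eventually_choose_mul_lt hc2 d)
  exact ⟨n₀, fun n hn => lt_bergeRamsey (exists_forall_hasMonoBerge (by omega) n (by omega))
    fun N hN => exists_not_hasMonoBerge hc (hn₀ n hn N hN)⟩
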